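/- arXiv:2309.08193 — 3 statements merged into one kernel-verified Lean document; each statement's English description precedes it below -/
import Mathlib

section
/- Let N be a standard normal real random variable. Then for any a ∈ ℝ and any b ≠ 0, E[ log⁻|a + bN| ] ≤ E[ log⁻|bN| ], and E[ log⁻|bN| ] < ∞. -/
open MeasureTheory ProbabilityTheory Filter RealInnerProductSpace

instance matrixMeasurableSpace {d : ℕ} : MeasurableSpace (Matrix (Fin d) (Fin d) ℝ) :=
  inferInstanceAs (MeasurableSpace (Fin d → Fin d → ℝ))

/-- The law of a `d × d` standard Gaussian matrix: all `d²` entries are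
independent standard normal random variables. -/
noncomputable def stdGaussianMatrix (d : ℕ) : Measure (Matrix (Fin d) (Fin d) ℝ) :=
  (Measure.pi fun _ : Fin d × Fin d => gaussianReal 0 1).map
    fun f => Matrix.of fun i j => f (i, j)

/-- The `j`-th column (0-based) of a `d × d` matrix, as a vector of
`EuclideanSpace ℝ (Fin d)`; junk value `0` for `j ≥ d`. -/
noncomputable def col {d : ℕ} (A : Matrix (Fin d) (Fin d) ℝ) (j : ℕ) :
    EuclideanSpace ℝ (Fin d) :=
  if h : j < d then (WithLp.equiv 2 (Fin d → ℝ)).symm (fun i => A i ⟨j, h⟩) else 0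

/-- `cCol A k` is the `k`-th column of `A`, 1-based. -/
noncomputable def cCol {d : ℕ} (A : Matrix (Fin d) (Fin d) ℝ) (k : ℕ) :
    EuclideanSpace ℝ (Fin d) := col A (k - 1)

/-- `cPerp A k` is the `k`-th vector (1-based) of the non-normalized Gram–Schmidt
orthogonalization of the columns of `A`. -/
noncomputable def cPerp {d : ℕ} (A : Matrix (Fin d) (Fin d) ℝ) (k : ℕ) :
    EuclideanSpace ℝ (Fin d) :=
  InnerProductSpace.gramSchmidt ℝ (col A) (k - 1)

/-- `cApprox A k = c_k'(A) = c_k(A) - ∑_{j<k} ⟨c_j(A), c_k(A)⟩ c_j(A)` (1-based `k`). -/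
noncomputable def cApprox {d : ℕ} (A : Matrix (Fin d) (Fin d) ℝ) (k : ℕ) :
    EuclideanSpace ℝ (Fin d) :=
  col A (k - 1) - ∑ j ∈ Finset.range (k - 1), (inner ℝ (col A j) (col A (k - 1)) : ℝ) • col A j

/-- `sval A k` is the `k`-th largest singular value of `A` (1-based), i.e. the
`k`-th largest square root of an eigenvalue of `AᴴA = AᵀA`. -/
noncomputable def sval {d : ℕ} (A : Matrix (Fin d) (Fin d) ℝ) (k : ℕ) : ℝ :=
  ((Finset.univ.val.map fun i =>
      Real.sqrt ((show (A.transpose * A).IsHermitian by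
        simpa [Matrix.conjTranspose_eq_transpose_of_trivial] using
          Matrix.isHermitian_conjTranspose_mul_self A).eigenvalues i)).sort (· ≤ ·)).getD
    (d - k) 0

/-- `matProd A n = A_n * A_{n-1} * ⋯ * A_1`. -/
noncomputable def matProd {d : ℕ} (A : ℕ → Matrix (Fin d) (Fin d) ℝ) :
    ℕ → Matrix (Fin d) (Fin d) ℝ
  | 0 => 1
  | n + 1 => A (n + 1) * matProd A n

/-- `negLog x = log⁻ x = max (0, -log x)`. -/
noncomputable def negLog (x : ℝ) : ℝ := max 0 (-Real.log x)

/-- `theta B j` is the distance from the `j`-th column (1-based) of `B` to the span of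
the other columns. -/
noncomputable def theta {d : ℕ} (B : Matrix (Fin d) (Fin d) ℝ) (j : ℕ) : ℝ :=
  Metric.infDist (cCol B j)
    (Submodule.span ℝ {v | ∃ i, 1 ≤ i ∧ i ≤ d ∧ i ≠ j ∧ v = cCol B i} :
      Set (EuclideanSpace ℝ (Fin d)))

/-- `Theta B = min_{1 ≤ j ≤ d} theta B j`. -/
noncomputable def Theta {d : ℕ} (B : Matrix (Fin d) (Fin d) ℝ) : ℝ :=
  ⨅ j : Fin d, theta B ((j : ℕ) + 1)


section GaussianHelpers
open Real Set

noncomputable def phi : ℝ → ℝ := gaussianPDFReal 0 1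

lemma phi_cont : Continuous phi := by
  unfold phi gaussianPDFReal
  fun_prop

lemma phi_nonneg (x : ℝ) : 0 ≤ phi x := gaussianPDFReal_nonneg 0 1 x

lemma phi_anti {x y : ℝ} (h : |x| ≤ |y|) : phi y ≤ phi x := by
  unfold phi gaussianPDFReal
  apply mul_le_mul_of_nonneg_left _ (by positivity)
  apply Real.exp_le_exp.2
  have hx : x ^ 2 ≤ y ^ 2 := by
    rw [← sq_abs x, ← sq_abs y]
    exact pow_le_pow_left₀ (abs_nonneg x) h 2
  simp only [sub_zero, NNReal.coe_one, mul_one]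
  linarith

lemma phi_even (x : ℝ) : phi (-x) = phi x := by
  unfold phi gaussianPDFReal
  norm_num

lemma key_c {s c : ℝ} (hs : 0 ≤ s) (hc : 0 ≤ c) :
    ∫ x in (c - s)..(c + s), phi x ≤ ∫ x in (-s)..s, phi x := by
  set m := min (c - s) s with hm
  set M := max (c - s) s with hM
  have hint : ∀ u v : ℝ, IntervalIntegrable phi volume u v :=
    fun u v => phi_cont.intervalIntegrable u v
  have hintc : ∀ u v : ℝ, IntervalIntegrable (fun x => phi (x + c)) volume u v :=
    fun u v => (phi_cont.comp (continuous_id.add continuous_const)).intervalIntegrable u v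
  have h1 : ∫ x in (c - s)..(c + s), phi x
      = (∫ x in (c - s)..M, phi x) + ∫ x in M..(c + s), phi x :=
    (intervalIntegral.integral_add_adjacent_intervals (hint _ _) (hint _ _)).symm
  have h2 : ∫ x in (-s)..s, phi x = (∫ x in (-s)..m, phi x) + ∫ x in m..s, phi x :=
    (intervalIntegral.integral_add_adjacent_intervals (hint _ _) (hint _ _)).symm
  have h3 : ∫ x in (c - s)..M, phi x = ∫ x in m..s, phi x := by
    rcases le_total (c - s) s with h | h
    · rw [hm, hM, min_eq_left h, max_eq_right h]
    · rw [hm, hM, min_eq_right h, max_eq_left h]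
      simp
  have hMc : M = c - m := by
    rcases le_total (c - s) s with h | h
    · rw [hm, hM, min_eq_left h, max_eq_right h]; ring
    · rw [hm, hM, min_eq_right h, max_eq_left h]
  have hms : -m ≤ s := by
    have : -s ≤ m := le_min (by linarith) (by linarith)
    linarith
  have h4 : ∫ x in M..(c + s), phi x = ∫ x in (-m)..s, phi (x + c) := by
    rw [intervalIntegral.integral_comp_add_right phi c, hMc]
    ring_nf
  have h5 : ∫ x in (-s)..m, phi x = ∫ x in (-m)..s, phi x := by
    have := intervalIntegral.integral_comp_neg (a := -m) (b := s) phi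
    simp only [neg_neg] at this
    rw [← this]
    simp_rw [phi_even]
  have h6 : ∫ x in (-m)..s, phi (x + c) ≤ ∫ x in (-m)..s, phi x := by
    apply intervalIntegral.integral_mono_on hms (hintc _ _) (hint _ _)
    intro x hx
    apply phi_anti
    have hxc : s ≤ x + c := by
      have : -m + c ≤ x + c := by linarith [hx.1]
      have hMs : s ≤ M := le_max_right _ _
      linarith [hMc ▸ hMs]
    rw [abs_of_nonneg (by linarith : (0:ℝ) ≤ x + c)]
    have hxm : -x ≤ m := by linarith [hx.1]
    have : m ≤ s := min_le_right _ _
    rw [abs_le]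
    constructor <;> linarith [hx.2]
  rw [h1, h2, h3]
  linarith [h4 ▸ h5 ▸ h6]

lemma key_real {s : ℝ} (hs : 0 ≤ s) (c : ℝ) :
    ∫ x in (c - s)..(c + s), phi x ≤ ∫ x in (-s)..s, phi x := by
  rcases le_or_gt 0 c with hc | hc
  · exact key_c hs hc
  · have hrefl : ∫ x in (c - s)..(c + s), phi x = ∫ x in (-c - s)..(-c + s), phi x := by
      have := intervalIntegral.integral_comp_neg (a := -c - s) (b := -c + s) phi
      simp_rw [phi_even] at this
      rw [this]
      ring_nf
    rw [hrefl]
    exact key_c hs (by linarith)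

lemma key_meas {r : ℝ} (hr : 0 < r) (c : ℝ) :
    gaussianReal 0 1 (Ioo (c - r) (c + r)) ≤ gaussianReal 0 1 (Ioo (-r) r) := by
  rw [gaussianReal_apply_eq_integral 0 one_ne_zero, gaussianReal_apply_eq_integral 0 one_ne_zero]
  apply ENNReal.ofReal_le_ofReal
  have e1 : ∫ x in Ioo (c - r) (c + r), gaussianPDFReal 0 1 x
      = ∫ x in (c - r)..(c + r), phi x := by
    rw [intervalIntegral.integral_of_le (by linarith), ← integral_Ioc_eq_integral_Ioo]
    rfl
  have e2 : ∫ x in Ioo (-r) r, gaussianPDFReal 0 1 x = ∫ x in (-r)..r, phi x := by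
    rw [intervalIntegral.integral_of_le (by linarith), ← integral_Ioc_eq_integral_Ioo]
    rfl
  rw [e1, e2]
  exact key_real hr.le c

theorem stmt5 (a b : ℝ) (hb : b ≠ 0) :
    (∫⁻ x, ENNReal.ofReal (negLog |a + b * x|) ∂(gaussianReal 0 1)) ≤
        (∫⁻ x, ENNReal.ofReal (negLog |b * x|) ∂(gaussianReal 0 1)) ∧
      (∫⁻ x, ENNReal.ofReal (negLog |b * x|) ∂(gaussianReal 0 1)) < ⊤ := by
  have hnn : ∀ y : ℝ, 0 ≤ negLog y := fun y => le_max_left _ _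
  have hm1 : Measurable fun x : ℝ => negLog |a + b * x| := by
    unfold negLog
    exact measurable_const.max
      (((measurable_const.add (measurable_id.const_mul b)).abs.log).neg)
  have hm2 : Measurable fun x : ℝ => negLog |b * x| := by
    unfold negLog
    exact measurable_const.max ((measurable_id.const_mul b).abs.log).neg
  have lc1 : (∫⁻ x, ENNReal.ofReal (negLog |a + b * x|) ∂(gaussianReal 0 1))
      = ∫⁻ t in Ioi 0, gaussianReal 0 1 {x | t < negLog |a + b * x|} :=
    lintegral_eq_lintegral_meas_lt _ (ae_of_all _ fun x => hnn _) hm1.aemeasurable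
  have lc2 : (∫⁻ x, ENNReal.ofReal (negLog |b * x|) ∂(gaussianReal 0 1))
      = ∫⁻ t in Ioi 0, gaussianReal 0 1 {x | t < negLog |b * x|} :=
    lintegral_eq_lintegral_meas_lt _ (ae_of_all _ fun x => hnn _) hm2.aemeasurable
  have hsing : ∀ p : ℝ, gaussianReal 0 1 {p} = 0 := fun p =>
    gaussianReal_absolutelyContinuous 0 one_ne_zero (measure_singleton p)
  -- per-t facts
  have claim2 : ∀ t : ℝ, 0 < t →
      {x : ℝ | t < negLog |b * x|} = Ioo (-(exp (-t) / |b|)) (exp (-t) / |b|) \ {0} := by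
    intro t ht
    ext x
    simp only [mem_setOf_eq, mem_diff, mem_Ioo, mem_singleton_iff]
    constructor
    · intro hx
      have ht' : t < -Real.log |b * x| := (lt_max_iff.1 hx).resolve_left (by linarith)
      have hne : x ≠ 0 := by rintro rfl; simp at ht'; linarith
      have habs : |b * x| < exp (-t) :=
        (Real.log_lt_iff_lt_exp (abs_pos.2 (mul_ne_zero hb hne))).1 (by linarith)
      rw [abs_mul] at habs
      have hxr : |x| < exp (-t) / |b| := by
        rw [lt_div_iff₀ (abs_pos.2 hb)]
        linarith [mul_comm |x| |b| ▸ habs]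
      exact ⟨abs_lt.1 hxr, hne⟩
    · rintro ⟨⟨h1, h2⟩, hne⟩
      have hxr : |x| < exp (-t) / |b| := abs_lt.2 ⟨h1, h2⟩
      have habs : |b * x| < exp (-t) := by
        rw [abs_mul]
        calc |b| * |x| < |b| * (exp (-t) / |b|) :=
              mul_lt_mul_of_pos_left hxr (abs_pos.2 hb)
          _ = exp (-t) := mul_div_cancel₀ _ (abs_ne_zero.2 hb)
      have hlog : Real.log |b * x| < -t :=
        (Real.log_lt_iff_lt_exp (abs_pos.2 (mul_ne_zero hb hne))).2 habs
      exact lt_of_lt_of_le (by linarith) (le_max_right _ _)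
  have claim1 : ∀ t : ℝ, 0 < t →
      {x : ℝ | t < negLog |a + b * x|}
        ⊆ Ioo (-a / b - exp (-t) / |b|) (-a / b + exp (-t) / |b|) := by
    intro t ht x hx
    have ht' : t < -Real.log |a + b * x| := (lt_max_iff.1 hx).resolve_left (by linarith)
    have hne : a + b * x ≠ 0 := by
      intro h; rw [h] at ht'; simp at ht'; linarith
    have habs : |a + b * x| < exp (-t) :=
      (Real.log_lt_iff_lt_exp (abs_pos.2 hne)).1 (by linarith)
    have hxp : x - -a / b = (a + b * x) / b := by field_simp; ring
    have hd : |x - -a / b| < exp (-t) / |b| := by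
      rw [hxp, abs_div]
      exact div_lt_div_of_pos_right habs (abs_pos.2 hb)
    obtain ⟨hl, hr⟩ := abs_lt.1 hd
    exact ⟨by linarith, by linarith⟩
  constructor
  · rw [lc1, lc2]
    apply lintegral_mono_ae
    filter_upwards [self_mem_ae_restrict measurableSet_Ioi] with t ht
    have hr : 0 < exp (-t) / |b| := div_pos (exp_pos _) (abs_pos.2 hb)
    calc gaussianReal 0 1 {x | t < negLog |a + b * x|}
        ≤ gaussianReal 0 1 (Ioo (-a / b - exp (-t) / |b|) (-a / b + exp (-t) / |b|)) :=
          measure_mono (claim1 t ht)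
      _ ≤ gaussianReal 0 1 (Ioo (-(exp (-t) / |b|)) (exp (-t) / |b|)) := key_meas hr _
      _ = gaussianReal 0 1 (Ioo (-(exp (-t) / |b|)) (exp (-t) / |b|) \ {0}) :=
          (measure_diff_null (hsing 0)).symm
      _ = gaussianReal 0 1 {x | t < negLog |b * x|} := by rw [claim2 t ht]
  · rw [lc2]
    set K : ℝ := 2 * phi 0 / |b| with hK
    have hK0 : 0 ≤ K := by
      apply div_nonneg _ (abs_nonneg _)
      linarith [phi_nonneg 0]
    have step : (∫⁻ t in Ioi 0, gaussianReal 0 1 {x | t < negLog |b * x|})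
        ≤ ∫⁻ t in Ioi 0, ENNReal.ofReal (K * exp (-t)) := by
      apply lintegral_mono_ae
      filter_upwards [self_mem_ae_restrict measurableSet_Ioi] with t ht
      set r : ℝ := exp (-t) / |b| with hrdef
      have hr : 0 < r := div_pos (exp_pos _) (abs_pos.2 hb)
      rw [claim2 t ht]
      calc gaussianReal 0 1 (Ioo (-r) r \ {0})
          ≤ gaussianReal 0 1 (Ioo (-r) r) := measure_mono diff_subset
        _ = ENNReal.ofReal (∫ x in Ioo (-r) r, gaussianPDFReal 0 1 x) :=
            gaussianReal_apply_eq_integral 0 one_ne_zero _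
        _ ≤ ENNReal.ofReal (K * exp (-t)) := by
            apply ENNReal.ofReal_le_ofReal
            have e : ∫ x in Ioo (-r) r, gaussianPDFReal 0 1 x = ∫ x in (-r)..r, phi x := by
              rw [intervalIntegral.integral_of_le (by linarith), ← integral_Ioc_eq_integral_Ioo]
              rfl
            rw [e]
            have h1 : ∫ x in (-r)..r, phi x ≤ ∫ x in (-r)..r, phi 0 := by
              apply intervalIntegral.integral_mono_on (by linarith)
                (phi_cont.intervalIntegrable _ _) intervalIntegrable_const
              intro x _
              exact phi_anti (by simp)
            have h2 : ∫ x in (-r)..r, phi 0 = (r - -r) • phi 0 :=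
              intervalIntegral.integral_const _
            rw [h2, smul_eq_mul] at h1
            calc ∫ x in (-r)..r, phi x ≤ (r - -r) * phi 0 := h1
              _ = K * exp (-t) := by rw [hrdef, hK]; field_simp; ring
    refine lt_of_le_of_lt step ?_
    have hint : IntegrableOn (fun t : ℝ => K * exp (-t)) (Ioi 0) := by
      have h := (exp_neg_integrableOn_Ioi 0 (one_pos (α := ℝ))).const_mul K
      simp only [neg_mul, one_mul] at h
      exact h
    rw [← ofReal_integral_eq_lintegral_ofReal hint
      (ae_of_all _ fun t => mul_nonneg hK0 (exp_pos _).le)]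
    exact ENNReal.ofReal_lt_top

end GaussianHelpers
end

section
/- For any d×d real matrix B and any vector y ∈ ℝ^d, ‖By‖ ≥ (1/√d) · Θ(B) · ‖y‖, where ‖·‖ is the Euclidean norm on ℝ^d. -/
open MeasureTheory ProbabilityTheory Filter RealInnerProductSpace

section Aux

lemma toEuclideanLin_eq_sum {d : ℕ} (B : Matrix (Fin d) (Fin d) ℝ)
    (y : EuclideanSpace ℝ (Fin d)) :
    Matrix.toEuclideanLin (𝕜 := ℝ) B y = ∑ j : Fin d, y j • col B (j : ℕ) := by
  ext i
  have h1 : (Matrix.toEuclideanLin (𝕜 := ℝ) B y) i = ∑ j, B i j * y j := by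
    simp [Matrix.toEuclideanLin, Matrix.toLin'_apply, Matrix.mulVec, dotProduct]
  have h2 : (∑ j : Fin d, y j • col B (j : ℕ)) i = ∑ j : Fin d, (y j • col B (j : ℕ)) i :=
    (congrFun (map_sum (WithLp.linearEquiv 2 ℝ (Fin d → ℝ))
      (fun j => y j • col B (j : ℕ)) Finset.univ) i).trans
      (Finset.sum_apply i Finset.univ _)
  rw [h1, h2]
  refine Finset.sum_congr rfl fun j _ => ?_
  simp [col, j.isLt, mul_comm]

lemma key_ineq {d : ℕ} (B : Matrix (Fin d) (Fin d) ℝ) (y : EuclideanSpace ℝ (Fin d))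
    (j : Fin d) : |y j| * theta B ((j : ℕ) + 1) ≤ ‖Matrix.toEuclideanLin (𝕜 := ℝ) B y‖ := by
  set S : Submodule ℝ (EuclideanSpace ℝ (Fin d)) :=
    Submodule.span ℝ {v | ∃ i, 1 ≤ i ∧ i ≤ d ∧ i ≠ (j : ℕ) + 1 ∧ v = cCol B i} with hS
  have hmem : ∀ i : Fin d, i ≠ j → col B (i : ℕ) ∈ S := by
    intro i hi
    apply Submodule.subset_span
    refine ⟨(i : ℕ) + 1, by omega, by omega, ?_, ?_⟩
    · intro h
      exact hi (Fin.ext (by omega))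
    · simp [cCol]
  rcases eq_or_ne (y j) 0 with hy | hy
  · rw [hy]
    simp
  · set w : EuclideanSpace ℝ (Fin d) :=
      Matrix.toEuclideanLin (𝕜 := ℝ) B y - y j • col B (j : ℕ) with hw
    have hwS : w ∈ S := by
      have : w = ∑ i ∈ Finset.univ.erase j, y i • col B (i : ℕ) := by
        rw [hw, toEuclideanLin_eq_sum, eq_comm, eq_sub_iff_add_eq]
        exact Finset.sum_erase_add Finset.univ _ (Finset.mem_univ j)
      rw [this]
      exact Submodule.sum_mem S fun i hi =>
        Submodule.smul_mem S _ (hmem i (Finset.ne_of_mem_erase hi))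
    have hcol : cCol B ((j : ℕ) + 1) = col B (j : ℕ) := by simp [cCol]
    have hdist : theta B ((j : ℕ) + 1) ≤
        dist (cCol B ((j : ℕ) + 1)) ((-(y j)⁻¹) • w) :=
      Metric.infDist_le_dist_of_mem (Submodule.smul_mem S _ hwS)
    have hdeq : dist (cCol B ((j : ℕ) + 1)) ((-(y j)⁻¹) • w)
        = |y j|⁻¹ * ‖Matrix.toEuclideanLin (𝕜 := ℝ) B y‖ := by
      rw [dist_eq_norm, hcol, neg_smul, sub_neg_eq_add]
      have : col B (j : ℕ) + (y j)⁻¹ • w = (y j)⁻¹ • Matrix.toEuclideanLin (𝕜 := ℝ) B y := by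
        rw [hw, smul_sub, smul_smul, inv_mul_cancel₀ hy, one_smul]
        abel
      rw [this, norm_smul, norm_inv, Real.norm_eq_abs]
    rw [hdeq] at hdist
    have hpos : (0 : ℝ) < |y j| := abs_pos.mpr hy
    calc |y j| * theta B ((j : ℕ) + 1)
        ≤ |y j| * (|y j|⁻¹ * ‖Matrix.toEuclideanLin (𝕜 := ℝ) B y‖) :=
          mul_le_mul_of_nonneg_left hdist (abs_nonneg _)
      _ = ‖Matrix.toEuclideanLin (𝕜 := ℝ) B y‖ := by
          rw [← mul_assoc, mul_inv_cancel₀ (ne_of_gt hpos), one_mul]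

lemma Theta_le_theta {d : ℕ} (B : Matrix (Fin d) (Fin d) ℝ) (j : Fin d) :
    Theta B ≤ theta B ((j : ℕ) + 1) := by
  refine ciInf_le ⟨0, ?_⟩ j
  rintro x ⟨i, rfl⟩
  exact Metric.infDist_nonneg

lemma Theta_nonneg {d : ℕ} (B : Matrix (Fin d) (Fin d) ℝ) : 0 ≤ Theta B :=
  Real.iInf_nonneg fun _ => Metric.infDist_nonneg

end Aux

theorem stmt8 {d : ℕ} (B : Matrix (Fin d) (Fin d) ℝ) (y : EuclideanSpace ℝ (Fin d)) :
    (1 / Real.sqrt d) * Theta B * ‖y‖ ≤ ‖Matrix.toEuclideanLin (𝕜 := ℝ) B y‖ := by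
  rcases Nat.eq_zero_or_pos d with hd | hd
  · subst hd
    have : y = 0 := Subsingleton.elim y 0
    rw [this]
    simp
  obtain ⟨j, _, hj⟩ := Finset.exists_max_image Finset.univ (fun i => |y i|)
    ⟨⟨0, hd⟩, Finset.mem_univ _⟩
  have hnorm : ‖y‖ ≤ Real.sqrt d * |y j| := by
    rw [EuclideanSpace.norm_eq]
    have hsum : ∑ i, ‖y i‖ ^ 2 ≤ (d : ℝ) * |y j| ^ 2 := by
      calc ∑ i : Fin d, ‖y i‖ ^ 2 ≤ ∑ _i : Fin d, |y j| ^ 2 :=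
            Finset.sum_le_sum fun i _ => by
              rw [Real.norm_eq_abs]
              exact pow_le_pow_left₀ (abs_nonneg _) (hj i (Finset.mem_univ i)) 2
        _ = (d : ℝ) * |y j| ^ 2 := by simp [mul_comm]
    calc Real.sqrt (∑ i, ‖y i‖ ^ 2) ≤ Real.sqrt ((d : ℝ) * |y j| ^ 2) :=
          Real.sqrt_le_sqrt hsum
      _ = Real.sqrt d * |y j| := by
          rw [Real.sqrt_mul (Nat.cast_nonneg d), Real.sqrt_sq (abs_nonneg _)]
  have hsd : (0 : ℝ) < Real.sqrt d := Real.sqrt_pos.mpr (by exact_mod_cast hd)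
  calc (1 / Real.sqrt d) * Theta B * ‖y‖
      ≤ (1 / Real.sqrt d) * Theta B * (Real.sqrt d * |y j|) :=
        mul_le_mul_of_nonneg_left hnorm
          (mul_nonneg (by positivity) (Theta_nonneg B))
    _ = |y j| * Theta B := by field_simp
    _ ≤ |y j| * theta B ((j : ℕ) + 1) :=
        mul_le_mul_of_nonneg_left (Theta_le_theta B j) (abs_nonneg _)
    _ ≤ ‖Matrix.toEuclideanLin (𝕜 := ℝ) B y‖ := key_ineq B y j
end

section
/- Let d ≥ 1, let ε > 0 and set η = |log ε|, and assume εη < 1/(100d). Let A = I + εX be a d×d real matrix with |X_{ik}| ≤ η for all i,k, and write c_j = c_j(A), c_j^⊥ = c_j^⊥(A). Then for each 1 ≤ n ≤ d there exist real numbers β_1, …, β_{n−1} with |β_j| ≤ 7εη for all j < n such that c_n^⊥ = c_n + Σ_{j<n} β_j c_j. -/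
set_option maxHeartbeats 1000000


open MeasureTheory ProbabilityTheory Filter RealInnerProductSpace

theorem stmt17 {d : ℕ} (hd : 1 ≤ d) (ε : ℝ) (hε : 0 < ε)
    (h : ε * |Real.log ε| < 1 / (100 * d))
    (X : Matrix (Fin d) (Fin d) ℝ) (hX : ∀ i k, |X i k| ≤ |Real.log ε|) :
    ∀ n, 1 ≤ n → n ≤ d →
      ∃ β : ℕ → ℝ, (∀ j, 1 ≤ j → j < n → |β j| ≤ 7 * (ε * |Real.log ε|)) ∧
        cPerp (1 + ε • X) n =
          cCol (1 + ε • X) n + ∑ j ∈ Finset.Ico 1 n, β j • cCol (1 + ε • X) j := by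
  set η := |Real.log ε| with hη
  set δ := ε * η with hδdef
  have hδ0 : 0 ≤ δ := mul_nonneg hε.le (abs_nonneg _)
  have hdpos : (0:ℝ) < d := by positivity
  have hdδ : (d:ℝ) * δ ≤ 1/100 := by
    have h2 : (d:ℝ) * δ < d * (1/(100*d)) := (mul_lt_mul_iff_right₀ hdpos).mpr h
    have h3 : (d:ℝ) * (1/(100*d)) = 1/100 := by field_simp
    linarith
  have hδsmall : δ ≤ 1/100 := by
    have : (1:ℝ) ≤ d := by exact_mod_cast hd
    nlinarith
  set A := (1 : Matrix (Fin d) (Fin d) ℝ) + ε • X with hA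
  set c : ℕ → EuclideanSpace ℝ (Fin d) := col A with hc
  -- entry formula
  have hAent : ∀ (k p : Fin d), A k p = (if k = p then (1:ℝ) else 0) + ε * X k p := by
    intro k p
    simp [hA, Matrix.add_apply, Matrix.one_apply, Matrix.smul_apply]
  have hcol : ∀ p : Fin d, c (p : ℕ) = (WithLp.equiv 2 (Fin d → ℝ)).symm (fun i => A i p) := by
    intro p
    simp [hc, col, p.isLt, Fin.eta]
  have hinner : ∀ p q : Fin d, ⟪c (p:ℕ), c (q:ℕ)⟫ = ∑ k, A k p * A k q := by
    intro p q
    rw [hcol p, hcol q]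
    simp [PiLp.inner_apply, RCLike.inner_apply, mul_comm]
  -- main estimate on inner products of columns
  have hest : ∀ p q : Fin d, |⟪c (p:ℕ), c (q:ℕ)⟫ - (if p = q then 1 else 0)| ≤ 2*δ + d*δ^2 := by
    intro p q
    have expand : ⟪c (p:ℕ), c (q:ℕ)⟫ = (if p = q then 1 else 0)
        + (ε * X p q + ε * X q p + ∑ k, (ε * X k p) * (ε * X k q)) := by
      rw [hinner p q]
      have : ∀ k : Fin d, A k p * A k q =
          ((if k = p then (1:ℝ) else 0) * (if k = q then 1 else 0))
          + ((if k = p then (1:ℝ) else 0) * (ε * X k q)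
          + ((if k = q then (1:ℝ) else 0) * (ε * X k p)
          + (ε * X k p) * (ε * X k q))) := by
        intro k
        rw [hAent k p, hAent k q]
        ring
      rw [Finset.sum_congr rfl fun k _ => this k]
      rw [Finset.sum_add_distrib, Finset.sum_add_distrib, Finset.sum_add_distrib]
      have e1 : ∑ k, (if k = p then (1:ℝ) else 0) * (if k = q then 1 else 0)
          = if p = q then 1 else 0 := by
        simp [ite_mul, Finset.sum_ite_eq', eq_comm]
      have e2 : ∑ k, (if k = p then (1:ℝ) else 0) * (ε * X k q) = ε * X p q := by
        simp [ite_mul, Finset.sum_ite_eq']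
      have e3 : ∑ k, (if k = q then (1:ℝ) else 0) * (ε * X k p) = ε * X q p := by
        simp [ite_mul, Finset.sum_ite_eq']
      rw [e1, e2, e3]
      ring
    have habs : ∀ i j : Fin d, |ε * X i j| ≤ δ := by
      intro i j
      rw [hδdef, abs_mul, abs_of_pos hε]
      exact mul_le_mul_of_nonneg_left (hX i j) hε.le
    have hsq : |∑ k, (ε * X k p) * (ε * X k q)| ≤ d * δ^2 := by
      calc |∑ k, (ε * X k p) * (ε * X k q)| ≤ ∑ k, |(ε * X k p) * (ε * X k q)| :=
            Finset.abs_sum_le_sum_abs _ _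
        _ ≤ ∑ _k : Fin d, δ^2 := by
            apply Finset.sum_le_sum
            intro k _
            rw [abs_mul, sq]
            exact mul_le_mul (habs k p) (habs k q) (abs_nonneg _) hδ0
        _ = d * δ^2 := by simp [mul_comm]
    rw [expand]
    rw [add_comm, add_sub_assoc, sub_self, add_zero]
    calc |ε * X p q + ε * X q p + ∑ k, (ε * X k p) * (ε * X k q)|
        ≤ |ε * X p q + ε * X q p| + |∑ k, (ε * X k p) * (ε * X k q)| := abs_add_le _ _
      _ ≤ (|ε * X p q| + |ε * X q p|) + d * δ^2 := add_le_add (abs_add_le _ _) hsq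
      _ ≤ (δ + δ) + d * δ^2 := by
          have := habs p q; have := habs q p; linarith
      _ = 2*δ + d*δ^2 := by ring
  -- off-diagonal and diagonal corollaries, with ℕ indices
  have hdd : (d:ℝ) * δ^2 ≤ δ/100 := by nlinarith [mul_le_mul_of_nonneg_right hdδ hδ0]
  have hoff : ∀ i j : ℕ, i < d → j < d → i ≠ j → |⟪c i, c j⟫| ≤ (21/10)*δ := by
    intro i j hi hj hij
    have := hest ⟨i, hi⟩ ⟨j, hj⟩
    rw [if_neg (by simp [Fin.mk.injEq]; omega)] at this
    simp only [sub_zero] at this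
    calc |⟪c i, c j⟫| ≤ 2*δ + d*δ^2 := this
      _ ≤ (21/10)*δ := by linarith
  have hdiag : ∀ i : ℕ, i < d → |⟪c i, c i⟫ - 1| ≤ (21/10)*δ := by
    intro i hi
    have := hest ⟨i, hi⟩ ⟨i, hi⟩
    rw [if_pos rfl] at this
    calc |⟪c i, c i⟫ - 1| ≤ 2*δ + d*δ^2 := this
      _ ≤ (21/10)*δ := by linarith
  -- generic sum bound
  have hsb : ∀ (s : Finset ℕ), s.card ≤ d → ∀ (f : ℕ → ℝ) (K : ℝ), 0 ≤ K →
      (∀ i ∈ s, |f i| ≤ K) → |∑ i ∈ s, f i| ≤ d * K := by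
    intro s hs f K hK hf
    calc |∑ i ∈ s, f i| ≤ ∑ i ∈ s, |f i| := Finset.abs_sum_le_sum_abs _ _
      _ ≤ ∑ _i ∈ s, K := Finset.sum_le_sum hf
      _ = s.card * K := by rw [Finset.sum_const, nsmul_eq_mul]
      _ ≤ d * K := mul_le_mul_of_nonneg_right (by exact_mod_cast hs) hK
  set g : ℕ → EuclideanSpace ℝ (Fin d) := InnerProductSpace.gramSchmidt ℝ c with hg
  have key : ∀ m, m < d → ∃ β : ℕ → ℝ, (∀ i, i < m → |β i| ≤ 3*δ) ∧
      g m = c m + ∑ i ∈ Finset.range m, β i • c i := by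
    intro m
    induction m using Nat.strong_induction_on with
    | _ m IH =>
      intro hmd
      choose! B hB1 hB2 using fun j (hj : j < m) => IH j hj (hj.trans hmd)
      -- lower bound on squared norms of previous Gram-Schmidt vectors
      have hnormsq : ∀ j, j < m → (97/100:ℝ) ≤ ‖g j‖^2 := by
        intro j hj
        have hjd : j < d := hj.trans hmd
        have h2 : |∑ i ∈ Finset.range j, B j i * ⟪c j, c i⟫| ≤ d * (3*δ * ((21/10)*δ)) := by
          apply hsb _ (by simpa using le_of_lt (lt_of_lt_of_le (Finset.card_range j ▸ hj) hmd.le)) _ _ (by positivity)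
          intro i hi
          have hi' := Finset.mem_range.mp hi
          rw [abs_mul]
          exact mul_le_mul (hB1 j hj i hi') (hoff j i hjd (by omega) (by omega))
            (abs_nonneg _) (by positivity)
        have h1 := abs_le.mp (hdiag j hjd)
        have h3 : (0:ℝ) ≤ ⟪(∑ i ∈ Finset.range j, B j i • c i : EuclideanSpace ℝ (Fin d)),
            ∑ i ∈ Finset.range j, B j i • c i⟫ := real_inner_self_nonneg
        have e2 : ⟪c j, ∑ i ∈ Finset.range j, B j i • c i⟫
            = ∑ i ∈ Finset.range j, B j i * ⟪c j, c i⟫ := by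
          rw [inner_sum]
          exact Finset.sum_congr rfl fun i _ => real_inner_smul_right _ _ _
        rw [← real_inner_self_eq_norm_sq, hB2 j hj, real_inner_add_add_self, e2]
        have h2' := abs_le.mp h2
        nlinarith [hdd, hδ0, hδsmall]
      -- bound on inner products with column m
      have hip : ∀ j, j < m → |⟪g j, c m⟫| ≤ (22/10)*δ := by
        intro j hj
        have hjd : j < d := hj.trans hmd
        have e1 : ⟪g j, c m⟫ = ⟪c j, c m⟫ + ∑ i ∈ Finset.range j, B j i * ⟪c i, c m⟫ := by
          rw [hB2 j hj, inner_add_left, sum_inner]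
          congr 1
          exact Finset.sum_congr rfl fun i _ => real_inner_smul_left _ _ _
        have h2 : |∑ i ∈ Finset.range j, B j i * ⟪c i, c m⟫| ≤ d * (3*δ * ((21/10)*δ)) := by
          apply hsb _ (by simpa using le_of_lt (lt_of_lt_of_le (Finset.card_range j ▸ hj) hmd.le)) _ _ (by positivity)
          intro i hi
          have hi' := Finset.mem_range.mp hi
          rw [abs_mul]
          exact mul_le_mul (hB1 j hj i hi') (hoff i m (by omega) hmd (by omega))
            (abs_nonneg _) (by positivity)
        have h1 := hoff j m hjd hmd (by omega)
        calc |⟪g j, c m⟫| ≤ |⟪c j, c m⟫| + |∑ i ∈ Finset.range j, B j i * ⟪c i, c m⟫| := by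
              rw [e1]; exact abs_add_le _ _
          _ ≤ (21/10)*δ + d * (3*δ * ((21/10)*δ)) := add_le_add h1 h2
          _ ≤ (22/10)*δ := by nlinarith [hdd, hδ0]
      set μ : ℕ → ℝ := fun j => ⟪g j, c m⟫ / ‖g j‖^2 with hμdef
      have hμ : ∀ j, j < m → |μ j| ≤ (23/10)*δ := by
        intro j hj
        have hn := hnormsq j hj
        have hipj := hip j hj
        have he : μ j = ⟪g j, c m⟫ / ‖g j‖^2 := rfl
        rw [he, abs_div, abs_of_nonneg (by positivity : (0:ℝ) ≤ ‖g j‖^2),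
          div_le_iff₀ (by linarith)]
        have hm2 := mul_le_mul_of_nonneg_left hn
          (mul_nonneg (by norm_num : (0:ℝ) ≤ 23/10) hδ0)
        nlinarith [hδ0]
      have hdef : g m = c m - ∑ j ∈ Finset.range m, μ j • g j := by
        rw [hg]
        rw [InnerProductSpace.gramSchmidt_def ℝ c m]
        congr 1
        rw [← Nat.Iio_eq_range]
        apply Finset.sum_congr rfl
        intro j _
        rw [Submodule.starProjection_singleton]
        rfl
      have hsum : ∑ j ∈ Finset.range m, μ j • g j
          = ∑ i ∈ Finset.range m, (μ i + ∑ j ∈ Finset.Ioo i m, μ j * B j i) • c i := by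
        have h1 : ∀ j ∈ Finset.range m, μ j • g j
            = μ j • c j + ∑ i ∈ Finset.range j, (μ j * B j i) • c i := by
          intro j hj
          rw [hB2 j (Finset.mem_range.mp hj), smul_add, Finset.smul_sum]
          congr 1
          exact Finset.sum_congr rfl fun i _ => (smul_smul _ _ _)
        rw [Finset.sum_congr rfl h1, Finset.sum_add_distrib]
        have h2 : ∑ j ∈ Finset.range m, ∑ i ∈ Finset.range j, (μ j * B j i) • c i
            = ∑ i ∈ Finset.range m, ∑ j ∈ Finset.Ioo i m, (μ j * B j i) • c i := by
          apply Finset.sum_comm'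
          intro j i
          simp only [Finset.mem_range, Finset.mem_Ioo]
          omega
        rw [h2, ← Finset.sum_add_distrib]
        apply Finset.sum_congr rfl
        intro i _
        rw [add_smul, Finset.sum_smul]
      refine ⟨fun i => -(μ i + ∑ j ∈ Finset.Ioo i m, μ j * B j i), ?_, ?_⟩
      · intro i hi
        rw [abs_neg]
        have hs : |∑ j ∈ Finset.Ioo i m, μ j * B j i| ≤ d * ((23/10)*δ * (3*δ)) := by
          apply hsb _ (by rw [Nat.card_Ioo]; omega) _ _ (by positivity)
          intro j hj
          have hj' := Finset.mem_Ioo.mp hj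
          rw [abs_mul]
          exact mul_le_mul (hμ j hj'.2) (hB1 j hj'.2 i hj'.1) (abs_nonneg _) (by positivity)
        calc |μ i + ∑ j ∈ Finset.Ioo i m, μ j * B j i|
            ≤ |μ i| + |∑ j ∈ Finset.Ioo i m, μ j * B j i| := abs_add_le _ _
          _ ≤ (23/10)*δ + d * ((23/10)*δ * (3*δ)) := add_le_add (hμ i hi) hs
          _ ≤ 3*δ := by nlinarith [hdd, hδ0]
      · rw [hdef, hsum, sub_eq_add_neg, ← Finset.sum_neg_distrib]
        congr 1
        exact Finset.sum_congr rfl fun i _ => (neg_smul _ _).symm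
  -- conclude
  intro n hn1 hnd
  have hm : n - 1 < d := by omega
  obtain ⟨β, hβ1, hβ2⟩ := key (n-1) hm
  refine ⟨fun j => β (j-1), ?_, ?_⟩
  · intro j hj1 hj2
    have hlt : j - 1 < n - 1 := by omega
    have := hβ1 (j-1) hlt
    calc |β (j-1)| ≤ 3*δ := this
      _ ≤ 7*(ε*|Real.log ε|) := by rw [hδdef, hη] at *; linarith
  · show g (n-1) = c (n-1) + ∑ j ∈ Finset.Ico 1 n, β (j-1) • c (j-1)
    rw [hβ2, Finset.sum_Ico_eq_sum_range]
    congr 1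
    apply Finset.sum_congr rfl
    intro i _
    simp [Nat.add_sub_cancel_left]
end
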